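/- The operators P^q_{12} and P^q_{23} on (\mathbb{C}^{m|n})^{\otimes 3} satisfy the braid relation P^q_{12} P^q_{23} P^q_{12} = P^q_{23} P^q_{12} P^q_{23}. -/

import Mathlib

open scoped BigOperators Classical
open Finset

namespace QSM

/-- Parity of a basis index of `ℂ^{m|n}`: `0` (even) for indices `< m`, `1` (odd) otherwise. -/
def pa (m : ℕ) {N : ℕ} (i : Fin N) : ℕ := if (i : ℕ) < m then 0 else 1

/-- The sign `ε(i - j)`: `1` if `i > j`, `0` if `i = j`, `-1` if `i < j`. -/
def eps {N : ℕ} (i j : Fin N) : ℤ :=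
  if (j : ℕ) < (i : ℕ) then 1 else if (i : ℕ) < (j : ℕ) then -1 else 0

variable {B : Type*} [Ring B] [Algebra ℂ B]

/-- Map a complex matrix into a matrix over the `ℂ`-algebra `B`. -/
noncomputable def cmap {I : Type*} (X : Matrix I I ℂ) : Matrix I I B :=
  X.map (algebraMap ℂ B)

/-- The super tensor product `E_{ij} ⊗ E_{kl}` of matrix units, as an operator on the
graded tensor square of `ℂ^{m|n}` (super sign conventions). -/
noncomputable def stu (m : ℕ) {N : ℕ} (i j k l : Fin N) :
    Matrix (Fin N × Fin N) (Fin N × Fin N) ℂ :=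
  Matrix.of fun p r =>
    ((-1 : ℂ) ^ ((pa m k + pa m l) * pa m r.1)) *
      (if p.1 = i ∧ r.1 = j then 1 else 0) * (if p.2 = k ∧ r.2 = l then 1 else 0)

/-- The operator `P^q = ∑_{i,j} q^{ε(i-j)} (-1)^{\bar j} E_{ij} ⊗ E_{ji}` on
`(ℂ^{m|n})^{⊗2}`. -/
noncomputable def Pq (q : ℂ) (m : ℕ) {N : ℕ} : Matrix (Fin N × Fin N) (Fin N × Fin N) ℂ :=
  ∑ i : Fin N, ∑ j : Fin N, (q ^ eps i j * (-1 : ℂ) ^ pa m j) • stu m i j j i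

/-- `M₁ = ∑ (-1)^{\bar i\bar j+\bar j} M_{ij} ⊗ E_{ij} ⊗ 1` on the tensor square. -/
noncomputable def Mone (m : ℕ) {N : ℕ} (M : Matrix (Fin N) (Fin N) B) :
    Matrix (Fin N × Fin N) (Fin N × Fin N) B :=
  Matrix.of fun p r =>
    if p.2 = r.2 then
      ((-1 : ℂ) ^ (pa m p.1 * pa m r.1 + pa m r.1)) • M p.1 r.1
    else 0

/-- `M₂ = ∑ (-1)^{\bar i\bar j+\bar j} M_{ij} ⊗ 1 ⊗ E_{ij}` on the tensor square
(with the super sign of `1 ⊗ E_{ij}`). -/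
noncomputable def Mtwo (m : ℕ) {N : ℕ} (M : Matrix (Fin N) (Fin N) B) :
    Matrix (Fin N × Fin N) (Fin N × Fin N) B :=
  Matrix.of fun p r =>
    if p.1 = r.1 then
      ((-1 : ℂ) ^ (pa m p.2 * pa m r.2 + pa m r.2 + (pa m p.2 + pa m r.2) * pa m r.1)) •
        M p.2 r.2
    else 0

/-- The `q`-super Manin matrix condition in matrix form:
`(1 - P^q) M₁ M₂ (1 + P^q) = 0`. -/
def IsManin (q : ℂ) (m : ℕ) {N : ℕ} (M : Matrix (Fin N) (Fin N) B) : Prop :=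
  (1 - cmap (Pq q m)) * Mone m M * Mtwo m M * (1 + cmap (Pq q m)) = 0

/-- The entrywise relations of the right quantum superalgebra `𝓜_{m|n}`. -/
def ManinRel (q : ℂ) (m : ℕ) {N : ℕ} (M : Matrix (Fin N) (Fin N) B) : Prop :=
  (∀ i j, pa m i = 1 → pa m j = 0 → M i j * M i j = 0) ∧
  (∀ i k l, pa m i = 1 →
    M i k * M i l = (q ^ eps l k * (-1 : ℂ) ^ ((pa m k + 1) * (pa m l + 1))) • (M i l * M i k)) ∧
  (∀ i j k, pa m k = 0 →
    M i k * M j k = (q ^ eps i j * (-1 : ℂ) ^ (pa m i * pa m j)) • (M j k * M i k)) ∧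
  (∀ i j k l,
    M i j * M k l -
        (q ^ (eps i k + eps l j) * (-1 : ℂ) ^ ((pa m i + pa m j) * (pa m k + pa m l))) •
          (M k l * M i j)
      = (q ^ eps i k * (-1 : ℂ) ^ (pa m i * pa m k + pa m j * pa m k + pa m i * pa m j)) •
            (M k j * M i l)
        - (q ^ eps l j * (-1 : ℂ) ^ (pa m j * pa m k + pa m j * pa m l + pa m k * pa m l)) •
            (M i l * M k j))

/-- The operator `P^q_σ` on `(ℂ^{m|n})^{⊗k}` (defined via reduced decompositions of `σ`;
equivalently, by the explicit inversion formula used here). -/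
noncomputable def Pperm (q : ℂ) (m : ℕ) {N k : ℕ} (σ : Equiv.Perm (Fin k)) :
    Matrix (Fin k → Fin N) (Fin k → Fin N) ℂ :=
  Matrix.of fun f g =>
    if f = g ∘ ⇑σ⁻¹ then
      ∏ p ∈ Finset.univ.filter (fun p : Fin k × Fin k => p.1 < p.2 ∧ σ p.2 < σ p.1),
        (q ^ eps (g p.1) (g p.2) * (-1 : ℂ) ^ (pa m (g p.1) * pa m (g p.2)))
    else 0

/-- The `q`-antisymmetrizer over the tensor positions in `S`. -/
noncomputable def AqS (q : ℂ) (m : ℕ) {N k : ℕ} (S : Finset (Fin k)) :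
    Matrix (Fin k → Fin N) (Fin k → Fin N) ℂ :=
  (S.card.factorial : ℂ)⁻¹ •
    ∑ σ ∈ Finset.univ.filter (fun σ : Equiv.Perm (Fin k) => ∀ t ∉ S, σ t = t),
      (((Equiv.Perm.sign σ : ℤ) : ℂ)) • Pperm q m (N := N) σ

/-- The `q`-symmetrizer over the tensor positions in `S`. -/
noncomputable def HqS (q : ℂ) (m : ℕ) {N k : ℕ} (S : Finset (Fin k)) :
    Matrix (Fin k → Fin N) (Fin k → Fin N) ℂ :=
  (S.card.factorial : ℂ)⁻¹ •
    ∑ σ ∈ Finset.univ.filter (fun σ : Equiv.Perm (Fin k) => ∀ t ∉ S, σ t = t),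
      Pperm q m (N := N) σ

/-- `M_a`: the copy of `M` in the `a`-th slot of `B ⊗ End(ℂ^{m|n})^{⊗k}`, with the super
sign factors `(-1)^{\bar i\bar j+\bar j}` and the super signs of `1⊗⋯⊗E_{ij}⊗⋯⊗1`. -/
noncomputable def Mslot (m : ℕ) {N k : ℕ} (M : Matrix (Fin N) (Fin N) B) (a : Fin k) :
    Matrix (Fin k → Fin N) (Fin k → Fin N) B :=
  Matrix.of fun f g =>
    if ∀ b, b ≠ a → f b = g b then
      ((-1 : ℂ) ^ (pa m (f a) * pa m (g a) + pa m (g a)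
          + (pa m (f a) + pa m (g a)) *
              ∑ b ∈ Finset.univ.filter (fun b => b < a), pa m (g b))) •
        M (f a) (g a)
    else 0

/-- The product `M₁ M₂ ⋯ M_k`. -/
noncomputable def MProd (m : ℕ) {N : ℕ} (M : Matrix (Fin N) (Fin N) B) (k : ℕ) :
    Matrix (Fin k → Fin N) (Fin k → Fin N) B :=
  (List.ofFn fun a : Fin k => Mslot m M a).prod

/-- The `q`-super Manin condition in the form `𝒜₂^q M₁ M₂ ℋ₂^q = 0`. -/
def IsManin2 (q : ℂ) (m : ℕ) {N : ℕ} (M : Matrix (Fin N) (Fin N) B) : Prop :=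
  cmap (AqS q m (Finset.univ : Finset (Fin 2))) * Mslot m M (0 : Fin 2) *
      Mslot m M (1 : Fin 2) * cmap (HqS q m (Finset.univ : Finset (Fin 2))) = 0

/-- The supertrace `str_{1,…,k}` over all `k` tensor slots. -/
noncomputable def strAll (m : ℕ) {N k : ℕ}
    (X : Matrix (Fin k → Fin N) (Fin k → Fin N) B) : B :=
  ∑ f : Fin k → Fin N, ((-1 : ℂ) ^ (∑ t, pa m (f t))) • X f f

/-- The supertrace of an `N × N` matrix. -/
noncomputable def strM (m : ℕ) {N : ℕ} (X : Matrix (Fin N) (Fin N) B) : B :=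
  ∑ i, ((-1 : ℂ) ^ pa m i) • X i i

/-- The star product `B * C = str₁ (P^q_{12} B₁ C₂)`. -/
noncomputable def starMul (q : ℂ) (m : ℕ) {N : ℕ} (X Y : Matrix (Fin N) (Fin N) B) :
    Matrix (Fin N) (Fin N) B :=
  Matrix.of fun i j =>
    ((-1 : ℂ) ^ (pa m i * pa m j + pa m j)) •
      ∑ a : Fin N, ((-1 : ℂ) ^ (pa m a * (1 + pa m i + pa m j))) •
        ((cmap (Pperm q m (Equiv.swap (0 : Fin 2) 1)) * Mslot m X (0 : Fin 2) *
            Mslot m Y (1 : Fin 2) :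
          Matrix (Fin 2 → Fin N) (Fin 2 → Fin N) B) ![a, i] ![a, j])

/-- The powers `M^{[k]}` of `M` with respect to the star product. -/
noncomputable def Mpow (q : ℂ) (m : ℕ) {N : ℕ} (M : Matrix (Fin N) (Fin N) B) :
    ℕ → Matrix (Fin N) (Fin N) B
  | 0 => 1
  | 1 => M
  | (j + 2) => starMul q m (Mpow q m M (j + 1)) M

/-- Coefficient of `t^k` in `A(t) = ∑ (-t)^k str_{1,…,k}(𝒜_k^q M₁⋯M_k)`. -/
noncomputable def coefA (q : ℂ) (m : ℕ) {N : ℕ} (M : Matrix (Fin N) (Fin N) B) (k : ℕ) : B :=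
  ((-1 : ℂ) ^ k) •
    strAll m (cmap (AqS q m (Finset.univ : Finset (Fin k))) * MProd m M k)

/-- Coefficient of `t^k` in `S(t) = ∑ t^k str_{1,…,k}(ℋ_k^q M₁⋯M_k)`. -/
noncomputable def coefS (q : ℂ) (m : ℕ) {N : ℕ} (M : Matrix (Fin N) (Fin N) B) (k : ℕ) : B :=
  strAll m (cmap (HqS q m (Finset.univ : Finset (Fin k))) * MProd m M k)

/-- Coefficient of `t^k` in `T(t) = ∑ t^k str(M^{[k+1]})`. -/
noncomputable def coefT (q : ℂ) (m : ℕ) {N : ℕ} (M : Matrix (Fin N) (Fin N) B) (k : ℕ) : B :=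
  strM m (Mpow q m M (k + 1))

/-- Coefficients `M^{i_1…i_k}_{j_1…j_k}` of `𝒜_k^q M₁⋯M_k` in the basis
`E_{i_1j_1} ⊗ ⋯ ⊗ E_{i_kj_k}` (super sign conventions). -/
noncomputable def MIJ (q : ℂ) (m : ℕ) {N k : ℕ} (M : Matrix (Fin N) (Fin N) B)
    (f g : Fin k → Fin N) : B :=
  ((-1 : ℂ) ^ (∑ a : Fin k, (pa m (f a) + pa m (g a)) *
      ∑ b ∈ Finset.univ.filter (fun b => b < a), pa m (g b))) •
    ((cmap (AqS q m (Finset.univ : Finset (Fin k))) * MProd m M k :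
      Matrix (Fin k → Fin N) (Fin k → Fin N) B) f g)

/-- Number of inversions (the length `l(σ)`) of a permutation. -/
def invCount {r : ℕ} (σ : Equiv.Perm (Fin r)) : ℕ :=
  (Finset.univ.filter fun p : Fin r × Fin r => p.1 < p.2 ∧ σ p.2 < σ p.1).card

/-- The quantum determinant `det_q(A) = ∑_σ (-q)^{-l(σ)} A_{σ(1),1} ⋯ A_{σ(r),r}`. -/
noncomputable def detq (q : ℂ) {r : ℕ} (A : Matrix (Fin r) (Fin r) B) : B :=
  ∑ σ : Equiv.Perm (Fin r),
    ((-q) ^ (-(invCount σ : ℤ))) • (List.ofFn fun i : Fin r => A (σ i) i).prod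

/-- The quantum Berezinian of a type `(r|s)` matrix `A` with (two-sided) inverse `Ainv`. -/
noncomputable def Ber (q : ℂ) (r s : ℕ) (A Ainv : Matrix (Fin (r + s)) (Fin (r + s)) B) : B :=
  (∑ σ : Equiv.Perm (Fin r), ((-q) ^ (-(invCount σ : ℤ))) •
      (List.ofFn fun i : Fin r => A (Fin.castAdd s (σ i)) (Fin.castAdd s i)).prod) *
  (∑ ρ : Equiv.Perm (Fin s), ((-q) ^ (-(invCount ρ : ℤ))) •
      (List.ofFn fun j : Fin s => Ainv (Fin.natAdd r j) (Fin.natAdd r (ρ j))).prod)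

/-- The `Π ∘ st` transform of a type `(r'|s')` matrix: a type `(s'|r')` matrix. -/
noncomputable def PiSt (r' s' : ℕ) (A : Matrix (Fin (r' + s')) (Fin (r' + s')) B) :
    Matrix (Fin (s' + r')) (Fin (s' + r')) B :=
  Matrix.of fun i j =>
    ((-1 : ℂ) ^ (pa s' i * (pa s' i + pa s' j))) •
      A (Fin.rev (Fin.cast (Nat.add_comm s' r') j)) (Fin.rev (Fin.cast (Nat.add_comm s' r') i))

/-- Left corner embedding `Fin a → Fin b`. -/
def embL (a b : ℕ) (h : a ≤ b) : Fin a → Fin b :=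
  fun i => ⟨(i : ℕ), lt_of_lt_of_le i.isLt h⟩

/-- Embedding of `Fin a` into `Fin b` shifted by `c`. -/
def embR (c a b : ℕ) (h : c + a ≤ b) : Fin a → Fin b :=
  fun i => ⟨c + (i : ℕ), by have := i.isLt; omega⟩

/-- `P^q ⊗ 1` on the triple tensor space. -/
noncomputable def P12 (q : ℂ) (m : ℕ) {N : ℕ} :
    Matrix (Fin N × Fin N × Fin N) (Fin N × Fin N × Fin N) ℂ :=
  Matrix.of fun p r =>
    Pq q m (p.1, p.2.1) (r.1, r.2.1) * (if p.2.2 = r.2.2 then 1 else 0)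

/-- `1 ⊗ P^q` on the triple tensor space (no extra super sign: `P^q` is even). -/
noncomputable def P23 (q : ℂ) (m : ℕ) {N : ℕ} :
    Matrix (Fin N × Fin N × Fin N) (Fin N × Fin N × Fin N) ℂ :=
  Matrix.of fun p r =>
    (if p.1 = r.1 then 1 else 0) * Pq q m (p.2.1, p.2.2) (r.2.1, r.2.2)

def monomialMatrix {α R : Type*} [DecidableEq α] [Zero R] (σ : α → α) (u : α → R) :
    Matrix α α R :=
  Matrix.of fun p r => if r = σ p then u p else 0

theorem monomialMatrix_mul_monomialMatrix {α R : Type*} [Fintype α] [DecidableEq α]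
    [NonUnitalNonAssocSemiring R] (σ τ : α → α) (u v : α → R) :
    monomialMatrix σ u * monomialMatrix τ v = monomialMatrix (τ ∘ σ) fun p => u p * v (σ p) := by
  ext p r
  rw [Matrix.mul_apply, Fintype.sum_eq_single (σ p)]
  · simp [monomialMatrix]
  · intro j hj
    simp [monomialMatrix, hj]

noncomputable def flipWeight (q : ℂ) (m : ℕ) {N : ℕ} (a b : Fin N) : ℂ :=
  q ^ eps a b * (-1 : ℂ) ^ (pa m a * pa m b)

lemma pa_eq_zero_or_eq_one (m : ℕ) {N : ℕ} (i : Fin N) : pa m i = 0 ∨ pa m i = 1 := by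
  unfold pa; split <;> simp

theorem Pq_apply (q : ℂ) (m : ℕ) {N : ℕ} (a b c d : Fin N) :
    Pq q m (a, b) (c, d) = if c = b ∧ d = a then flipWeight q m a b else 0 := by
  simp only [Pq, Matrix.sum_apply, Matrix.smul_apply, stu, Matrix.of_apply, smul_eq_mul]
  rw [Fintype.sum_eq_single a, Fintype.sum_eq_single c]
  · by_cases h : c = b ∧ d = a
    · obtain ⟨rfl, rfl⟩ := h
      -- the super sign `(-1)^{(\bar c + \bar d)\bar c}` of `E_{dc} ⊗ E_{cd}` times `(-1)^{\bar c}`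
      -- is `(-1)^{\bar c \bar d}`
      simp only [and_self, if_true, mul_one, flipWeight, mul_assoc, ← pow_add]
      rcases pa_eq_zero_or_eq_one m d with hd | hd <;>
        rcases pa_eq_zero_or_eq_one m c with hc | hc <;> norm_num [hc, hd]
    · have h' : ¬(b = c ∧ d = a) := fun h'' => h ⟨h''.1.symm, h''.2⟩
      simp [h, h']
  · intro x hx
    simp [Ne.symm hx]
  · intro x hx
    simp [Ne.symm hx]

theorem P12_eq_monomialMatrix (q : ℂ) (m : ℕ) {N : ℕ} :
    P12 q m (N := N) =
      monomialMatrix (fun p => (p.2.1, p.1, p.2.2)) fun p => flipWeight q m p.1 p.2.1 := by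
  ext ⟨a, b, c⟩ ⟨d, e, f⟩
  simp only [P12, monomialMatrix, Matrix.of_apply, Pq_apply, Prod.mk.injEq]
  split_ifs <;> simp_all

theorem P23_eq_monomialMatrix (q : ℂ) (m : ℕ) {N : ℕ} :
    P23 q m (N := N) =
      monomialMatrix (fun p => (p.1, p.2.2, p.2.1)) fun p => flipWeight q m p.2.1 p.2.2 := by
  ext ⟨a, b, c⟩ ⟨d, e, f⟩
  simp only [P23, monomialMatrix, Matrix.of_apply, Pq_apply, Prod.mk.injEq]
  split_ifs <;> simp_all

theorem stmt1_general (m n : ℕ) (q : ℂ) :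
    P12 q m (N := m + n) * P23 q m * P12 q m = P23 q m * P12 q m * P23 q m := by
  simp only [P12_eq_monomialMatrix, P23_eq_monomialMatrix, monomialMatrix_mul_monomialMatrix]
  -- both sides reverse `e_a ⊗ e_b ⊗ e_c`, collecting one flip weight for each pair of factors
  congr 1
  funext ⟨a, b, c⟩
  simp only [Function.comp_apply]
  ring

/-- the braid relation `P^q₁₂ P^q₂₃ P^q₁₂ = P^q₂₃ P^q₁₂ P^q₂₃`. -/
theorem stmt1 (m n : ℕ) (q : ℂ) (hq : q ≠ 0) :
    P12 q m (N := m + n) * P23 q m * P12 q m = P23 q m * P12 q m * P23 q m :=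
  stmt1_general m n q

end QSM
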